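/- Let Z_• be a green nonlinear stability function, M a module, and M₁ ⊆ M the maximal submodule with t₀(M₁) = t₁(M). If M₁ ≠ M, then t₁(M/M₁) > t₁(M). -/

import Mathlib

open scoped BigOperators

noncomputable section

/-- Dot product of a real vector with a dimension vector. -/
def dprod {n : ℕ} (x : Fin n → ℝ) (v : Fin n → ℕ) : ℝ := ∑ i, x i * (v i : ℝ)

/-- Slope of a dimension vector with respect to a linear stability function
`Z(x) = a·x + i b·x`. -/
def zslope {n : ℕ} (a b : Fin n → ℝ) (v : Fin n → ℕ) : ℝ := dprod a v / dprod b v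

/-- The semistability set `D(M)` of a module `M`, with respect to a dimension-vector
assignment `d`. -/
def DSet {Λ : Type} [Ring Λ] {n : ℕ}
    (d : (N : Type) → [AddCommGroup N] → [Module Λ N] → Fin n → ℕ)
    (M : Type) [AddCommGroup M] [Module Λ M] : Set (Fin n → ℝ) :=
  {x | dprod x (d M) = 0 ∧ ∀ M' : Submodule Λ M, dprod x (d ↥M') ≤ 0}

/-- A module is Schurian if it is nonzero and every nonzero endomorphism is invertible,
i.e. its endomorphism ring is a division algebra. -/
def Schurian (Λ : Type) [Ring Λ] (M : Type) [AddCommGroup M] [Module Λ M] : Prop :=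
  (∃ y : M, y ≠ 0) ∧ ∀ f : M →ₗ[Λ] M, f ≠ 0 → Function.Bijective f

/-- `X` belongs to `E(M)`: `X` admits a finite filtration with all subquotients
isomorphic to `M`. -/
def IsFiltered (Λ : Type) [Ring Λ] (M : Type) [AddCommGroup M] [Module Λ M]
    (X : Type) [AddCommGroup X] [Module Λ X] : Prop :=
  ∃ (k : ℕ) (F : Fin (k + 1) → Submodule Λ X), Monotone F ∧ F 0 = ⊥ ∧ F (Fin.last k) = ⊤ ∧
    ∀ i : Fin k, Nonempty
      ((↥(F i.succ) ⧸ Submodule.comap (F i.succ).subtype (F i.castSucc)) ≃ₗ[Λ] M)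

/-- Slope at time `t` of a dimension vector, for a nonlinear stability function
`Z_t(x) = a_t·x + i b_t·x`. -/
def muZ {n : ℕ} (a b : ℝ → Fin n → ℝ) (t : ℝ) (v : Fin n → ℕ) : ℝ :=
  dprod (a t) v / dprod (b t) v

/-- `M` is `Z_t`-semistable: every nonzero submodule has zslope at least that of `M`. -/
def Semistable {Λ : Type} [Ring Λ] {n : ℕ}
    (d : (N : Type) → [AddCommGroup N] → [Module Λ N] → Fin n → ℕ)
    (a b : ℝ → Fin n → ℝ) (t : ℝ)
    (M : Type) [AddCommGroup M] [Module Λ M] : Prop :=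
  ∀ M' : Submodule Λ M, M' ≠ ⊥ → muZ a b t (d M) ≤ muZ a b t (d ↥M')

/-- The nonlinear stability function given by `(a, b)` is green (for `Λ`): at every
semistable pair `(N, t₀)` (with `N` a nonzero finite-length `Λ`-module, `N`
`Z_{t₀}`-semistable and `μ_{t₀}(N) = t₀`), the derivative of `t ↦ μ_t(N)` at `t₀`
is `< 1`. -/
def ZGreen {Λ : Type} [Ring Λ] {n : ℕ}
    (d : (N : Type) → [AddCommGroup N] → [Module Λ N] → Fin n → ℕ)
    (a b : ℝ → Fin n → ℝ) : Prop :=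
  ∀ (N : Type) [AddCommGroup N] [Module Λ N] [IsNoetherian Λ N] [IsArtinian Λ N] (t₀ : ℝ),
    (∃ y : N, y ≠ 0) → Semistable d a b t₀ N → muZ a b t₀ (d N) = t₀ →
      deriv (fun t => muZ a b t (d N)) t₀ < 1

/-- `t₀(M)`: the smallest `t` with `μ_t(M) = t` (as an infimum). -/
def tzero {n : ℕ} (a b : ℝ → Fin n → ℝ) (v : Fin n → ℕ) : ℝ := sInf {t | muZ a b t v = t}

/-- `t₁(M)`: the smallest value of `t₀(M')` over nonzero submodules `M' ⊆ M`. -/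
def tone {Λ : Type} [Ring Λ] {n : ℕ}
    (d : (N : Type) → [AddCommGroup N] → [Module Λ N] → Fin n → ℕ)
    (a b : ℝ → Fin n → ℝ)
    (M : Type) [AddCommGroup M] [Module Λ M] : ℝ :=
  sInf {s : ℝ | ∃ M' : Submodule Λ M, M' ≠ ⊥ ∧ s = tzero a b (d ↥M')}

/-!
Write `t₁ = t₁(M)`. For `0 ≠ B ⊆ M/M₁` the preimage `N ⊋ M₁` has `t₀(N) > t₁` by maximality of
`M₁`, so `μ_{t₁}(N) > t₁ = μ_{t₁}(M₁)`, and since `dim N = dim M₁ + dim B` also `μ_{t₁}(B) > t₁`.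

Next, `μ_s(X) ≥ s` for all `0 ≠ X ⊆ M/M₁` and `s < t₁`. Otherwise let `c ∈ (s, t₁)` be the first
zero of `μ_t(X) - t` after `s`: it is approached from below, so `d/dt μ_t(X) ≥ 1` at `c` and
greenness makes `X` not `Z_c`-semistable. A destabilizing `X' ⊊ X` has `μ_c(X') < c`, and
descending in the Artinian module gives a contradiction.

Finally, if `t₁(M/M₁) ≤ t₁`, it equals `t₀(K)` for some `K`, which is `Z_{t₀(K)}`-semistable; the
strict inequality at `t₁` forces `t₀(K) < t₁`, and greenness makes `μ_t(K) < t` just after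
`t₀(K)`, contradicting the previous step.
-/

open Function Filter Set Topology

section RealFixedPoints

variable {f : ℝ → ℝ} {C T m c s t : ℝ}

theorem exists_abs_le_of_continuous_of_const_outside (hf : Continuous f) (hT : 0 ≤ T)
    (hright : ∀ t, T ≤ t → f t = f T) (hleft : ∀ t, t ≤ -T → f t = f (-T)) :
    ∃ C, ∀ t, |f t| ≤ C := by
  obtain ⟨C, hC⟩ := isCompact_Icc.exists_bound_of_continuousOn (s := Icc (-T) T) hf.continuousOn
  refine ⟨C, fun t => ?_⟩
  rcases le_total T t with ht | ht
  · rw [hright t ht]; exact hC T ⟨by linarith, le_rfl⟩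
  rcases le_total t (-T) with ht' | ht'
  · rw [hleft t ht']; exact hC (-T) ⟨le_rfl, by linarith⟩
  · exact hC t ⟨ht', ht⟩

theorem exists_isFixedPt_le (hf : Continuous f) (hC : ∀ t, |f t| ≤ C) (ht : f t ≤ t) :
    ∃ z ≤ t, IsFixedPt f z := by
  set l := min t (-C)
  have hl : l ≤ f l := by linarith [(abs_le.mp (hC l)).1, min_le_right t (-C)]
  obtain ⟨z, hz, hfz⟩ := intermediate_value_Icc' (min_le_left t (-C))
    (hf.sub continuous_id).continuousOn (show (0 : ℝ) ∈ Icc (f t - t) (f l - l) by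
      constructor <;> linarith)
  exact ⟨z, hz.2, sub_eq_zero.mp hfz⟩

theorem isLeast_csInf_fixedPoints (hf : Continuous f) (hb : ∃ C, ∀ t, |f t| ≤ C) :
    IsLeast (fixedPoints f) (sInf (fixedPoints f)) := by
  obtain ⟨C, hC⟩ := hb
  have hne : (fixedPoints f).Nonempty :=
    let ⟨z, _, hz⟩ := exists_isFixedPt_le hf hC (abs_le.mp (hC C)).2
    ⟨z, hz⟩
  have hbdd : BddBelow (fixedPoints f) :=
    ⟨-C, fun z (hz : f z = z) => hz ▸ (abs_le.mp (hC z)).1⟩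
  exact (isClosed_eq hf continuous_id).isLeast_csInf hne hbdd

theorem lt_of_lt_csInf_fixedPoints (hf : Continuous f) (hb : ∃ C, ∀ t, |f t| ≤ C)
    (ht : t < sInf (fixedPoints f)) : t < f t := by
  obtain ⟨C, hC⟩ := hb
  by_contra! hft
  obtain ⟨z, hzt, hz⟩ := exists_isFixedPt_le hf hC hft
  exact (ht.trans_le ((isLeast_csInf_fixedPoints hf ⟨C, hC⟩).2 hz)).not_ge hzt

theorem le_of_le_csInf_fixedPoints (hf : Continuous f) (hb : ∃ C, ∀ t, |f t| ≤ C)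
    (ht : t ≤ sInf (fixedPoints f)) : t ≤ f t := by
  rcases ht.lt_or_eq with ht | rfl
  · exact (lt_of_lt_csInf_fixedPoints hf hb ht).le
  · exact (isLeast_csInf_fixedPoints hf hb).1.ge

theorem exists_first_isFixedPt (hf : Continuous f) (hst : s < t) (hs : f s < s) (ht : t < f t) :
    ∃ c ∈ Ioo s t, IsFixedPt f c ∧ ∀ u ∈ Ioo s c, f u < u := by
  set Z := Icc s t ∩ {r | r ≤ f r}
  have hZ : IsLeast Z (sInf Z) :=
    (isClosed_Icc.inter (isClosed_le continuous_id hf)).isLeast_csInf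
      ⟨t, ⟨hst.le, le_rfl⟩, ht.le⟩ ⟨s, fun r hr => hr.1.1⟩
  obtain ⟨⟨⟨hsc, hct⟩, hc : sInf Z ≤ f (sInf Z)⟩, hmin⟩ := hZ
  -- the sign change of `f - id` on `[s, sInf Z]` produces a fixed point, necessarily `sInf Z`
  obtain ⟨z, hz, hfz⟩ := intermediate_value_Icc hsc (hf.sub continuous_id).continuousOn
    (show (0 : ℝ) ∈ Icc (f s - s) (f (sInf Z) - sInf Z) by constructor <;> linarith)
  have hfz : f z = z := sub_eq_zero.mp hfz
  have hzc : z = sInf Z := le_antisymm hz.2 (hmin ⟨⟨hz.1, hz.2.trans hct⟩, hfz.ge⟩)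
  subst hzc
  refine ⟨_, ⟨?_, ?_⟩, hfz, fun u hu => ?_⟩
  · exact hsc.lt_of_ne fun h => by rw [← h] at hfz; linarith
  · exact hct.lt_of_ne fun h => by rw [h] at hfz; linarith
  · by_contra! hu'
    exact (hmin ⟨⟨hu.1.le, hu.2.le.trans hct⟩, hu'⟩).not_gt hu.2

theorem HasDerivAt.eventually_lt_self (hf : HasDerivAt f m c) (hm : m < 1) (hc : f c = c) :
    (∀ᶠ u in 𝓝[<] c, u < f u) ∧ ∀ᶠ u in 𝓝[>] c, f u < u := by
  have hslope : ∀ᶠ u in 𝓝[≠] c, slope (fun u => f u - u) c u < 0 :=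
    hasDerivAt_iff_tendsto_slope.mp (hf.sub (hasDerivAt_id c)) (Iio_mem_nhds (by linarith))
  constructor
  · filter_upwards [nhdsLT_le_nhdsNE c hslope, self_mem_nhdsWithin] with u hu (huc : u < c)
    rw [slope_def_field, hc, sub_self, sub_zero, div_neg_iff] at hu
    rcases hu with ⟨h₁, h₂⟩ | ⟨h₁, h₂⟩ <;> linarith
  · filter_upwards [nhdsGT_le_nhdsNE c hslope, self_mem_nhdsWithin] with u hu (huc : c < u)
    rw [slope_def_field, hc, sub_self, sub_zero, div_neg_iff] at hu
    rcases hu with ⟨h₁, h₂⟩ | ⟨h₁, h₂⟩ <;> linarith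

end RealFixedPoints

section Slope

variable {n : ℕ}

theorem dprod_add (x : Fin n → ℝ) (u w : Fin n → ℕ) :
    dprod x (u + w) = dprod x u + dprod x w := by
  simp [dprod, mul_add, Finset.sum_add_distrib]

theorem dprod_pos {x : Fin n → ℝ} (hx : ∀ i, 0 < x i) {v : Fin n → ℕ} (hv : v ≠ 0) :
    0 < dprod x v := by
  obtain ⟨i, hi⟩ := Function.ne_iff.mp hv
  exact Finset.sum_pos' (fun j _ => by have := hx j; positivity)
    ⟨i, Finset.mem_univ i, mul_pos (hx i) (by simpa [Nat.pos_iff_ne_zero] using hi)⟩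

theorem lt_muZ_of_lt_muZ_add {a b : ℝ → Fin n → ℝ} {t s : ℝ} {u w : Fin n → ℕ}
    (hu : 0 < dprod (b t) u) (hw : 0 < dprod (b t) w) (hus : muZ a b t u = s)
    (h : s < muZ a b t (u + w)) : s < muZ a b t w := by
  rw [muZ, div_eq_iff hu.ne'] at hus
  rw [muZ, dprod_add, dprod_add, lt_div_iff₀ (add_pos hu hw)] at h
  rw [muZ, lt_div_iff₀ hw]
  linarith

end Slope

structure IsNonlinearStabilityFunction {n : ℕ} (a b : ℝ → Fin n → ℝ) : Prop where
  b_pos : ∀ t i, 0 < b t i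
  contDiff_a : ∀ i, ContDiff ℝ 1 (fun t => a t i)
  contDiff_b : ∀ i, ContDiff ℝ 1 (fun t => b t i)
  eventually_const : ∃ T : ℝ, 0 < T ∧ (∀ t, T ≤ t → a t = a T ∧ b t = b T) ∧
    (∀ t, t ≤ -T → a t = a (-T) ∧ b t = b (-T))

namespace IsNonlinearStabilityFunction

variable {n : ℕ} {a b : ℝ → Fin n → ℝ} {v : Fin n → ℕ} {t : ℝ}

theorem dprod_b_pos (hZ : IsNonlinearStabilityFunction a b) (hv : v ≠ 0) (t : ℝ) :
    0 < dprod (b t) v :=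
  dprod_pos (hZ.b_pos t) hv

theorem differentiable_muZ (hZ : IsNonlinearStabilityFunction a b) (hv : v ≠ 0) :
    Differentiable ℝ (fun t => muZ a b t v) := by
  have hdprod : ∀ x : ℝ → Fin n → ℝ, (∀ i, ContDiff ℝ 1 (fun t => x t i)) →
      Differentiable ℝ (fun t => dprod (x t) v) := fun x hx =>
    Differentiable.fun_sum fun i _ => ((hx i).differentiable one_ne_zero).mul_const _
  exact (hdprod a hZ.contDiff_a).div (hdprod b hZ.contDiff_b) fun t => (hZ.dprod_b_pos hv t).ne'

theorem exists_abs_muZ_le (hZ : IsNonlinearStabilityFunction a b) (hv : v ≠ 0) :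
    ∃ C, ∀ t, |muZ a b t v| ≤ C := by
  obtain ⟨T, hT, hright, hleft⟩ := hZ.eventually_const
  refine exists_abs_le_of_continuous_of_const_outside (hZ.differentiable_muZ hv).continuous
    hT.le (fun t ht => ?_) (fun t ht => ?_)
  · simp only [muZ, hright t ht]
  · simp only [muZ, hleft t ht]

theorem muZ_tzero (hZ : IsNonlinearStabilityFunction a b) (hv : v ≠ 0) :
    muZ a b (tzero a b v) v = tzero a b v :=
  (isLeast_csInf_fixedPoints (hZ.differentiable_muZ hv).continuous (hZ.exists_abs_muZ_le hv)).1

theorem lt_muZ_of_lt_tzero (hZ : IsNonlinearStabilityFunction a b) (hv : v ≠ 0)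
    (ht : t < tzero a b v) : t < muZ a b t v :=
  lt_of_lt_csInf_fixedPoints (hZ.differentiable_muZ hv).continuous (hZ.exists_abs_muZ_le hv) ht

theorem le_muZ_of_le_tzero (hZ : IsNonlinearStabilityFunction a b) (hv : v ≠ 0)
    (ht : t ≤ tzero a b v) : t ≤ muZ a b t v :=
  le_of_le_csInf_fixedPoints (hZ.differentiable_muZ hv).continuous (hZ.exists_abs_muZ_le hv) ht

end IsNonlinearStabilityFunction

theorem Submodule.exists_ne_zero_of_ne_bot {R M : Type*} [Ring R] [AddCommGroup M] [Module R M]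
    {p : Submodule R M} (hp : p ≠ ⊥) : ∃ y : p, y ≠ 0 :=
  have := Submodule.nontrivial_iff_ne_bot.mpr hp
  exists_ne 0

theorem Submodule.map_subtype_ne_bot {R M : Type*} [Ring R] [AddCommGroup M] [Module R M]
    {p : Submodule R M} {q : Submodule R p} (hq : q ≠ ⊥) : q.map p.subtype ≠ ⊥ := fun h =>
  hq <| Submodule.map_injective_of_injective p.injective_subtype (by rwa [Submodule.map_bot])

structure IsDimensionVector {Λ : Type} [Ring Λ] {n : ℕ}
    (d : (N : Type) → [AddCommGroup N] → [Module Λ N] → Fin n → ℕ) : Prop where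
  iso : ∀ (N N' : Type) [AddCommGroup N] [Module Λ N] [AddCommGroup N'] [Module Λ N']
    [IsNoetherian Λ N] [IsArtinian Λ N], (N ≃ₗ[Λ] N') → d N = d N'
  add : ∀ (N : Type) [AddCommGroup N] [Module Λ N] [IsNoetherian Λ N] [IsArtinian Λ N]
    (A : Submodule Λ N), d ↥A + d (N ⧸ A) = d N
  eq_zero_iff : ∀ (N : Type) [AddCommGroup N] [Module Λ N] [IsNoetherian Λ N] [IsArtinian Λ N],
    (d N = 0 ↔ ∀ y : N, y = 0)

namespace IsDimensionVector

variable {Λ : Type} [Ring Λ] {n : ℕ}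
  {d : (N : Type) → [AddCommGroup N] → [Module Λ N] → Fin n → ℕ}
  {X : Type} [AddCommGroup X] [Module Λ X] [IsNoetherian Λ X] [IsArtinian Λ X]

theorem ne_zero (hd : IsDimensionVector d) {B : Submodule Λ X} (hB : B ≠ ⊥) : d B ≠ 0 := by
  obtain ⟨y, hy⟩ := Submodule.exists_ne_zero_of_ne_bot hB
  exact fun h => hy ((hd.eq_zero_iff B).mp h y)

theorem map_subtype (hd : IsDimensionVector d) (B : Submodule Λ X) (B' : Submodule Λ B) :
    d (B'.map B.subtype) = d B' :=
  (hd.iso _ _ (Submodule.equivMapOfInjective B.subtype B.injective_subtype B')).symm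

theorem le (hd : IsDimensionVector d) (B : Submodule Λ X) : d B ≤ d X :=
  hd.add X B ▸ le_self_add

theorem comap_mkQ (hd : IsDimensionVector d) (M₁ : Submodule Λ X) (B : Submodule Λ (X ⧸ M₁)) :
    d (B.comap M₁.mkQ) = d M₁ + d B := by
  set N := B.comap M₁.mkQ
  have hM₁N : M₁ ≤ N := by simpa using LinearMap.ker_le_comap M₁.mkQ (p := B)
  set g : N →ₗ[Λ] X ⧸ M₁ := M₁.mkQ.comp N.subtype
  have hker : LinearMap.ker g = M₁.comap N.subtype := by
    rw [LinearMap.ker_comp, Submodule.ker_mkQ]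
  have hrange : LinearMap.range g = B := by
    rw [LinearMap.range_comp, Submodule.range_subtype,
      Submodule.map_comap_eq_of_surjective M₁.mkQ_surjective]
  rw [← hd.add N (M₁.comap N.subtype), hd.iso _ _ (Submodule.comapSubtypeEquivOfLe hM₁N),
    hd.iso _ _ ((Submodule.quotEquivOfEq _ _ hker.symm).trans
      (g.quotKerEquivRange.trans (LinearEquiv.ofEq _ _ hrange)))]

end IsDimensionVector

section Tone

variable {Λ : Type} [Ring Λ] {n : ℕ}
  {d : (N : Type) → [AddCommGroup N] → [Module Λ N] → Fin n → ℕ} {a b : ℝ → Fin n → ℝ}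
  {X : Type} [AddCommGroup X] [Module Λ X] [IsNoetherian Λ X] [IsArtinian Λ X]

theorem IsDimensionVector.finite_tzero_submodules (hd : IsDimensionVector d) :
    {s : ℝ | ∃ B : Submodule Λ X, B ≠ ⊥ ∧ s = tzero a b (d ↥B)}.Finite :=
  ((Set.finite_Icc 0 (d X)).image (tzero a b)).subset <| by
    rintro s ⟨B, -, rfl⟩
    exact ⟨d B, ⟨zero_le, hd.le B⟩, rfl⟩

theorem IsDimensionVector.tone_le_tzero (hd : IsDimensionVector d) {B : Submodule Λ X}
    (hB : B ≠ ⊥) : tone d a b X ≤ tzero a b (d B) :=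
  csInf_le hd.finite_tzero_submodules.bddBelow ⟨B, hB, rfl⟩

theorem IsDimensionVector.exists_tzero_eq_tone (hd : IsDimensionVector d) [Nontrivial X] :
    ∃ K : Submodule Λ X, K ≠ ⊥ ∧ tzero a b (d K) = tone d a b X := by
  obtain ⟨K, hK, h⟩ := Set.Nonempty.csInf_mem
    (⟨_, ⊤, top_ne_bot, rfl⟩ : {s : ℝ | ∃ B : Submodule Λ X, B ≠ ⊥ ∧ s = tzero a b (d ↥B)}.Nonempty)
    hd.finite_tzero_submodules
  exact ⟨K, hK, h.symm⟩

theorem semistable_of_tzero_eq_tone (hd : IsDimensionVector d)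
    (hZ : IsNonlinearStabilityFunction a b) {K : Submodule Λ X} (hK : K ≠ ⊥)
    (hKt : tzero a b (d K) = tone d a b X) : Semistable d a b (tzero a b (d K)) K := by
  intro K' hK'
  have hK'X := Submodule.map_subtype_ne_bot hK'
  rw [hZ.muZ_tzero (hd.ne_zero hK), ← hd.map_subtype]
  exact hZ.le_muZ_of_le_tzero (hd.ne_zero hK'X) (hKt ▸ hd.tone_le_tzero hK'X)

end Tone

namespace ZGreen

variable {Λ : Type} [Ring Λ] {n : ℕ}
  {d : (N : Type) → [AddCommGroup N] → [Module Λ N] → Fin n → ℕ} {a b : ℝ → Fin n → ℝ}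
  {Q : Type} [AddCommGroup Q] [Module Λ Q] [IsNoetherian Λ Q] [IsArtinian Λ Q] {t₁ : ℝ}

theorem le_muZ_of_lt (hgreen : ZGreen d a b) (hd : IsDimensionVector d)
    (hZ : IsNonlinearStabilityFunction a b)
    (hQ : ∀ B : Submodule Λ Q, B ≠ ⊥ → t₁ < muZ a b t₁ (d B))
    (X : Submodule Λ Q) (hX : X ≠ ⊥) {s : ℝ} (hs : s < t₁) : s ≤ muZ a b s (d X) := by
  induction X using WellFoundedLT.induction generalizing s with
  | ind X ih =>
    by_contra! hXs
    have hdX := hZ.differentiable_muZ (hd.ne_zero hX)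
    obtain ⟨c, ⟨hsc, hct⟩, hc : muZ a b c (d X) = c, hleft⟩ :=
      exists_first_isFixedPt hdX.continuous hs hXs (hQ X hX)
    -- `μ_t(X) - t` reaches `0` at `c` from below, so the green condition forbids semistability
    have hnss : ¬ Semistable d a b c X := fun hss => by
      have hder := hgreen X c (Submodule.exists_ne_zero_of_ne_bot hX) hss hc
      obtain ⟨u, hu, hu'⟩ :=
        (((hdX c).hasDerivAt.eventually_lt_self hder hc).1.and (Ioo_mem_nhdsLT hsc)).exists
      exact (hleft u hu').not_gt hu
    obtain ⟨X', hX', hX'c⟩ : ∃ X' : Submodule Λ X, X' ≠ ⊥ ∧ muZ a b c (d X') < c := by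
      simpa [Semistable, hc] using hnss
    rw [← hd.map_subtype] at hX'c
    have hX'X : X'.map X.subtype < X := (Submodule.map_subtype_le X X').lt_of_ne fun h => by
      rw [h, hc] at hX'c
      exact hX'c.false
    exact (ih _ hX'X (Submodule.map_subtype_ne_bot hX') hct).not_gt hX'c

theorem lt_tone (hgreen : ZGreen d a b) (hd : IsDimensionVector d)
    (hZ : IsNonlinearStabilityFunction a b) [Nontrivial Q]
    (hQ : ∀ B : Submodule Λ Q, B ≠ ⊥ → t₁ < muZ a b t₁ (d B)) : t₁ < tone d a b Q := by
  obtain ⟨K, hK, hKt⟩ := hd.exists_tzero_eq_tone (a := a) (b := b) (X := Q)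
  have hfix := hZ.muZ_tzero (hd.ne_zero hK)
  rw [← hKt]
  by_contra! hle
  rcases hle.lt_or_eq with hlt | heq
  · have hder := hgreen K _ (Submodule.exists_ne_zero_of_ne_bot hK)
      (semistable_of_tzero_eq_tone hd hZ hK hKt) hfix
    obtain ⟨s, hs, hs'⟩ := (((hZ.differentiable_muZ (hd.ne_zero hK) _).hasDerivAt
      |>.eventually_lt_self hder hfix).2.and (Ioo_mem_nhdsGT hlt)).exists
    exact (hgreen.le_muZ_of_lt hd hZ hQ K hK hs'.2).not_gt hs
  · exact (hQ K hK).ne (heq ▸ hfix).symm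

end ZGreen

theorem tone_lt_muZ_quotient {Λ : Type} [Ring Λ] {n : ℕ}
    {d : (N : Type) → [AddCommGroup N] → [Module Λ N] → Fin n → ℕ} {a b : ℝ → Fin n → ℝ}
    (hd : IsDimensionVector d) (hZ : IsNonlinearStabilityFunction a b)
    {M : Type} [AddCommGroup M] [Module Λ M] [IsNoetherian Λ M] [IsArtinian Λ M]
    {M₁ : Submodule Λ M} (hM₁0 : M₁ ≠ ⊥) (hM₁t : tzero a b (d ↥M₁) = tone d a b M)
    (hM₁max : ∀ N : Submodule Λ M, N ≠ ⊥ → tzero a b (d ↥N) = tone d a b M → N ≤ M₁)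
    {B : Submodule Λ (M ⧸ M₁)} (hB : B ≠ ⊥) : tone d a b M < muZ a b (tone d a b M) (d B) := by
  set N := B.comap M₁.mkQ
  have hN : N ≠ ⊥ :=
    ne_bot_of_le_ne_bot hM₁0 (by simpa using LinearMap.ker_le_comap M₁.mkQ (p := B))
  have hNt : tone d a b M < tzero a b (d N) := (hd.tone_le_tzero hN).lt_of_ne fun h => hB <| by
    have hNM₁ : N ≤ (⊥ : Submodule Λ (M ⧸ M₁)).comap M₁.mkQ := by
      simpa using hM₁max N hN h.symm
    exact le_bot_iff.mp ((Submodule.comap_le_comap_iff_of_surjective M₁.mkQ_surjective).mp hNM₁)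
  have hμN := hZ.lt_muZ_of_lt_tzero (hd.ne_zero hN) hNt
  rw [hd.comap_mkQ] at hμN
  exact lt_muZ_of_lt_muZ_add (hZ.dprod_b_pos (hd.ne_zero hM₁0) _)
    (hZ.dprod_b_pos (hd.ne_zero hB) _) (hM₁t ▸ hZ.muZ_tzero (hd.ne_zero hM₁0)) hμN

theorem stmt14_general (Λ : Type) [Ring Λ] {n : ℕ}
    (d : (N : Type) → [AddCommGroup N] → [Module Λ N] → Fin n → ℕ)
    (hiso : ∀ (N N' : Type) [AddCommGroup N] [Module Λ N] [AddCommGroup N'] [Module Λ N']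
      [IsNoetherian Λ N] [IsArtinian Λ N], (N ≃ₗ[Λ] N') → d N = d N')
    (hadd : ∀ (N : Type) [AddCommGroup N] [Module Λ N] [IsNoetherian Λ N] [IsArtinian Λ N]
      (A : Submodule Λ N), d ↥A + d (N ⧸ A) = d N)
    (hzero : ∀ (N : Type) [AddCommGroup N] [Module Λ N] [IsNoetherian Λ N] [IsArtinian Λ N],
      (d N = 0 ↔ ∀ y : N, y = 0))
    (a b : ℝ → Fin n → ℝ)
    (hbpos : ∀ t i, 0 < b t i)
    (hC1a : ∀ i, ContDiff ℝ 1 (fun t => a t i))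
    (hC1b : ∀ i, ContDiff ℝ 1 (fun t => b t i))
    (hconst : ∃ T : ℝ, 0 < T ∧ (∀ t, T ≤ t → a t = a T ∧ b t = b T) ∧
      (∀ t, t ≤ -T → a t = a (-T) ∧ b t = b (-T)))
    (hgreen : ZGreen d a b)
    (M : Type) [AddCommGroup M] [Module Λ M] [IsNoetherian Λ M] [IsArtinian Λ M]
    (M₁ : Submodule Λ M) (hM₁0 : M₁ ≠ ⊥)
    (hM₁t : tzero a b (d ↥M₁) = tone d a b M)
    (hM₁max : ∀ N : Submodule Λ M, N ≠ ⊥ → tzero a b (d ↥N) = tone d a b M → N ≤ M₁)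
    (hne : M₁ ≠ ⊤) :
    tone d a b M < tone d a b (M ⧸ M₁) := by
  have hd : IsDimensionVector d := ⟨hiso, hadd, hzero⟩
  have hZ : IsNonlinearStabilityFunction a b := ⟨hbpos, hC1a, hC1b, hconst⟩
  have : Nontrivial (M ⧸ M₁) := Submodule.Quotient.nontrivial_iff.mpr hne
  exact hgreen.lt_tone hd hZ fun B hB => tone_lt_muZ_quotient hd hZ hM₁0 hM₁t hM₁max hB

/-- For a green nonlinear stability function, a module `M`, and `M₁ ⊆ M`
the maximal submodule with `t₀(M₁) = t₁(M)`: if `M₁ ≠ M` then `t₁(M/M₁) > t₁(M)`. -/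
theorem stmt14 (Λ : Type) [Ring Λ] {n : ℕ}
    (d : (N : Type) → [AddCommGroup N] → [Module Λ N] → Fin n → ℕ)
    (hiso : ∀ (N N' : Type) [AddCommGroup N] [Module Λ N] [AddCommGroup N'] [Module Λ N']
      [IsNoetherian Λ N] [IsArtinian Λ N], (N ≃ₗ[Λ] N') → d N = d N')
    (hadd : ∀ (N : Type) [AddCommGroup N] [Module Λ N] [IsNoetherian Λ N] [IsArtinian Λ N]
      (A : Submodule Λ N), d ↥A + d (N ⧸ A) = d N)
    (hzero : ∀ (N : Type) [AddCommGroup N] [Module Λ N] [IsNoetherian Λ N] [IsArtinian Λ N],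
      (d N = 0 ↔ ∀ y : N, y = 0))
    (a b : ℝ → Fin n → ℝ)
    (hbpos : ∀ t i, 0 < b t i)
    (hC1a : ∀ i, ContDiff ℝ 1 (fun t => a t i))
    (hC1b : ∀ i, ContDiff ℝ 1 (fun t => b t i))
    (hconst : ∃ T : ℝ, 0 < T ∧ (∀ t, T ≤ t → a t = a T ∧ b t = b T) ∧
      (∀ t, t ≤ -T → a t = a (-T) ∧ b t = b (-T)))
    (hgreen : ZGreen d a b)
    (M : Type) [AddCommGroup M] [Module Λ M] [IsNoetherian Λ M] [IsArtinian Λ M]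
    (hM0 : ∃ y : M, y ≠ 0)
    (M₁ : Submodule Λ M) (hM₁0 : M₁ ≠ ⊥)
    (hM₁t : tzero a b (d ↥M₁) = tone d a b M)
    (hM₁max : ∀ N : Submodule Λ M, N ≠ ⊥ → tzero a b (d ↥N) = tone d a b M → N ≤ M₁)
    (hne : M₁ ≠ ⊤) :
    tone d a b M < tone d a b (M ⧸ M₁) :=
  stmt14_general Λ d hiso hadd hzero a b hbpos hC1a hC1b hconst hgreen M M₁ hM₁0 hM₁t hM₁max hne
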